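/- arXiv:2506.05778 — 3 statements merged into one kernel-verified Lean document; each statement's English description precedes it below -/
import Mathlib

section
/- For every n ≥ 4, the image of the homomorphism Φ_3^{(2)} : Γ_n^4 → (ℤ/2ℤ)[n]_3 is a ℤ/2ℤ-vector space of dimension C(n−1,3); that is, Φ_3^{(2)}(Γ_n^4) ≅ (ℤ/2ℤ)^{C(n−1,3)}. -/
set_option maxHeartbeats 1000000

/-- Ordered quadruples of elements of `Fin n`, used to index the generators `(ijkl)`. -/
abbrev Quad (n : ℕ) : Type := Fin n × Fin n × Fin n × Fin n

/-- The underlying set `{i, j, k, l}` of a quadruple `(i, j, k, l)`. -/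
def qFinset {n : ℕ} (q : Quad n) : Finset (Fin n) := {q.1, q.2.1, q.2.2.1, q.2.2.2}

/-- The four entries of the quadruple are pairwise distinct. -/
def qDistinct {n : ℕ} (q : Quad n) : Prop := (qFinset q).card = 4

/-- The defining relators of the group `Γ_n^4` of Kim–Manturov:
generators indexed by quadruples of distinct elements (non-distinct quadruples are killed),
involutive relations (1), commutativity relations (2), pentagon relations (3) and dihedral
relations (4). -/
def gammaRels (n : ℕ) : Set (FreeGroup (Quad n)) :=
  {w | ∃ q : Quad n, ¬ qDistinct q ∧ w = FreeGroup.of q} ∪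
  {w | ∃ q : Quad n, qDistinct q ∧ w = FreeGroup.of q * FreeGroup.of q} ∪
  {w | ∃ q r : Quad n, qDistinct q ∧ qDistinct r ∧ (qFinset q ∩ qFinset r).card ≤ 2 ∧
      w = FreeGroup.of q * FreeGroup.of r * (FreeGroup.of q)⁻¹ * (FreeGroup.of r)⁻¹} ∪
  {w | ∃ i j k l m : Fin n, ({i, j, k, l, m} : Finset (Fin n)).card = 5 ∧
      w = FreeGroup.of (i, j, k, l) * FreeGroup.of (i, j, l, m) * FreeGroup.of (j, k, l, m) *
        FreeGroup.of (i, j, k, m) * FreeGroup.of (i, k, l, m)} ∪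
  {w | ∃ i j k l : Fin n, qDistinct (i, j, k, l) ∧
      (w = FreeGroup.of (i, j, k, l) * (FreeGroup.of (j, k, l, i))⁻¹ ∨
       w = FreeGroup.of (i, j, k, l) * (FreeGroup.of (l, k, j, i))⁻¹)}

/-- The group `Γ_n^4` of Kim–Manturov. -/
abbrev Gamma (n : ℕ) : Type := PresentedGroup (gammaRels n)

/-- The generator `(ijkl)` of `Γ_n^4`. -/
def gg {n : ℕ} (q : Quad n) : Gamma n := PresentedGroup.of q
/-- The `ℤ/2ℤ`-vector space `(ℤ/2ℤ)[n]_3` based on the set of 3-element subsets of `Fin n`. -/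
abbrev VThree (n : ℕ) : Type := {s : Finset (Fin n) // s.card = 3} →₀ ZMod 2

/-- The basis element `{i, j, k}` of `(ℤ/2ℤ)[n]_3` (equal to `0` if `i, j, k` are not
distinct). -/
noncomputable def tri2 {n : ℕ} (i j k : Fin n) : VThree n :=
  if h : ({i, j, k} : Finset (Fin n)).card = 3 then Finsupp.single ⟨{i, j, k}, h⟩ 1 else 0

/-- The `ℤ/2ℤ`-vector space `(ℤ/2ℤ)[n]_2` based on the set of 2-element subsets of `Fin n`. -/
abbrev VTwo (n : ℕ) : Type := {s : Finset (Fin n) // s.card = 2} →₀ ZMod 2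

/-- The basis element `{i, j}` of `(ℤ/2ℤ)[n]_2` (equal to `0` if `i = j`). -/
noncomputable def pair2 {n : ℕ} (i j : Fin n) : VTwo n :=
  if h : ({i, j} : Finset (Fin n)).card = 2 then Finsupp.single ⟨{i, j}, h⟩ 1 else 0

/-! ### Auxiliary material -/

namespace GammaAux

variable {n : ℕ}

/-- `dd s` is the basis vector of `VThree n` indexed by `s` (or `0` if `s` has not card 3). -/
noncomputable def dd (s : Finset (Fin n)) : VThree n :=
  if h : s.card = 3 then Finsupp.single ⟨s, h⟩ 1 else 0

lemma tri2_eq_dd (i j k : Fin n) : tri2 i j k = dd {i, j, k} := rfl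

lemma tri2_comm1 (i j k : Fin n) : tri2 i j k = tri2 j i k := by
  simp only [tri2_eq_dd]; rw [Finset.insert_comm]

lemma tri2_comm2 (i j k : Fin n) : tri2 i j k = tri2 i k j := by
  simp only [tri2_eq_dd]; rw [Finset.pair_comm]

/-- The image of the generator `(ijkl)` in `VThree n`. -/
noncomputable def tet (i j k l : Fin n) : VThree n :=
  tri2 i j k + tri2 i j l + tri2 i k l + tri2 j k l

lemma addself (x : VThree n) : x + x = 0 := by
  ext t; simp [CharTwo.add_self_eq_zero]

lemma neg_two_zsmul (x : VThree n) : (-2 : ℤ) • x = 0 := by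
  rw [show (-2 : ℤ) = -2 from rfl, neg_smul, two_zsmul, addself, neg_zero]

lemma tet_rel (i j k l m : Fin n) :
    tet i j k l = tet i j k m + tet i j l m + tet i k l m + tet j k l m := by
  unfold tet
  rw [← sub_eq_zero]
  abel_nf
  simp [two_nsmul, two_zsmul, addself]

lemma tet_swap1 (i j k l : Fin n) : tet i j k l = tet j i k l := by
  unfold tet
  rw [tri2_comm1 j i k, tri2_comm1 j i l]
  abel

lemma tet_swap2 (i j k l : Fin n) : tet i j k l = tet i k j l := by
  unfold tet
  rw [tri2_comm2 i k j, tri2_comm1 k j l]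
  abel

lemma tet_swap3 (i j k l : Fin n) : tet i j k l = tet i j l k := by
  unfold tet
  rw [tri2_comm2 i l k, tri2_comm2 j l k]
  abel

lemma tet_cycle (i j k l : Fin n) : tet i j k l = tet j k l i := by
  rw [tet_swap1, tet_swap2, tet_swap3]

lemma card3_le (a b c : Fin n) : ({a, b, c} : Finset (Fin n)).card ≤ 3 := by
  have h1 := Finset.card_insert_le a ({b, c} : Finset (Fin n))
  have h2 := Finset.card_insert_le b ({c} : Finset (Fin n))
  simp at *; omega

lemma card4_ne {i j k l : Fin n} (h : ({i, j, k, l} : Finset (Fin n)).card = 4) :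
    i ≠ j ∧ i ≠ k ∧ i ≠ l ∧ j ≠ k ∧ j ≠ l ∧ k ≠ l := by
  refine ⟨?_, ?_, ?_, ?_, ?_, ?_⟩ <;> rintro rfl
  · rw [show ({i, i, k, l} : Finset (Fin n)) = {i, k, l} by ext x; simp; try tauto] at h
    have := card3_le i k l; omega
  · rw [show ({i, j, i, l} : Finset (Fin n)) = {i, j, l} by ext x; simp; try tauto] at h
    have := card3_le i j l; omega
  · rw [show ({i, j, k, i} : Finset (Fin n)) = {i, j, k} by ext x; simp; try tauto] at h
    have := card3_le i j k; omega
  · rw [show ({i, j, j, l} : Finset (Fin n)) = {i, j, l} by ext x; simp; try tauto] at h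
    have := card3_le i j l; omega
  · rw [show ({i, j, k, j} : Finset (Fin n)) = {i, j, k} by ext x; simp; try tauto] at h
    have := card3_le i j k; omega
  · rw [show ({i, j, k, k} : Finset (Fin n)) = {i, j, k} by ext x; simp; try tauto] at h
    have := card3_le i j k; omega

lemma card3_of_ne {i j k : Fin n} (hij : i ≠ j) (hik : i ≠ k) (hjk : j ≠ k) :
    ({i, j, k} : Finset (Fin n)).card = 3 := by
  rw [Finset.card_insert_of_notMem (by simp [hij, hik]),
    Finset.card_insert_of_notMem (by simp [hjk]), Finset.card_singleton]

lemma card4_of_ne {i j k l : Fin n} (hij : i ≠ j) (hik : i ≠ k) (hil : i ≠ l)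
    (hjk : j ≠ k) (hjl : j ≠ l) (hkl : k ≠ l) :
    ({i, j, k, l} : Finset (Fin n)).card = 4 := by
  rw [Finset.card_insert_of_notMem (by simp [hij, hik, hil]),
    Finset.card_insert_of_notMem (by simp [hjk, hjl]),
    Finset.card_insert_of_notMem (by simp [hkl]), Finset.card_singleton]

section WithM

variable (M : Fin n)

/-- Basis vectors of the image: for a `3`-subset `s` avoiding `M`, the image of the
tetrahedron on `s ∪ {M}`. -/
noncomputable def bb (s : Finset (Fin n)) : VThree n :=
  dd s + ∑ x ∈ s, dd (insert M (s.erase x))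

lemma bb_eq {i j k : Fin n} (hij : i ≠ j) (hik : i ≠ k) (hjk : j ≠ k) :
    bb M {i, j, k} = tet i j k M := by
  have e1 : ({i, j, k} : Finset (Fin n)).erase i = {j, k} :=
    Finset.erase_insert (by simp [hij, hik])
  have e2 : ({i, j, k} : Finset (Fin n)).erase j = {i, k} := by
    rw [Finset.insert_comm]
    exact Finset.erase_insert (by simp [hij.symm, hjk])
  have e3 : ({i, j, k} : Finset (Fin n)).erase k = {i, j} := by
    rw [Finset.pair_comm j k, Finset.insert_comm]
    exact Finset.erase_insert (by simp [hik.symm, hjk.symm])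
  rw [bb, Finset.sum_insert (by simp [hij, hik]), Finset.sum_insert (by simp [hjk]),
    Finset.sum_singleton, e1, e2, e3]
  have h1 : dd (insert M ({j, k} : Finset (Fin n))) = tri2 j k M := by
    rw [tri2_eq_dd]; exact congrArg dd (by ext x; simp; tauto)
  have h2 : dd (insert M ({i, k} : Finset (Fin n))) = tri2 i k M := by
    rw [tri2_eq_dd]; exact congrArg dd (by ext x; simp; tauto)
  have h3 : dd (insert M ({i, j} : Finset (Fin n))) = tri2 i j M := by
    rw [tri2_eq_dd]; exact congrArg dd (by ext x; simp; tauto)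
  rw [h1, h2, h3]
  unfold tet
  rw [tri2_eq_dd i j k]
  abel

lemma dd_apply_ne (s : Finset (Fin n)) (t : {u : Finset (Fin n) // u.card = 3})
    (hne : s ≠ t.1) : dd s t = 0 := by
  rw [dd]
  split
  · rw [Finsupp.single_apply, if_neg (by simpa [Subtype.ext_iff] using hne)]
  · rfl

lemma dd_apply (s : Finset (Fin n)) (h : s.card = 3) (t : {u : Finset (Fin n) // u.card = 3}) :
    dd s t = if s = t.1 then 1 else 0 := by
  rw [dd, dif_pos h, Finsupp.single_apply]
  simp [Subtype.ext_iff]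

/-- The index type of the basis: 3-subsets avoiding `M`. -/
abbrev II : Type := {s : Finset (Fin n) // s.card = 3 ∧ M ∉ s}

/-- The basis of the image. -/
noncomputable def bI : II M → VThree n := fun s => bb M s.1

lemma bI_apply (s t : II M) : bI M s ⟨t.1, t.2.1⟩ = if s = t then 1 else 0 := by
  rw [bI, bb, Finsupp.add_apply, Finsupp.finset_sum_apply]
  have hz : ∀ x ∈ s.1, dd (insert M (s.1.erase x)) ⟨t.1, t.2.1⟩ = 0 := by
    intro x _
    exact dd_apply_ne _ _ (fun h => t.2.2 (h ▸ Finset.mem_insert_self M _))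
  rw [Finset.sum_congr rfl hz, Finset.sum_const, smul_zero, add_zero,
    dd_apply s.1 s.2.1]
  simp [Subtype.ext_iff]

lemma bI_li : LinearIndependent (ZMod 2) (bI M) := by
  rw [Fintype.linearIndependent_iff]
  intro g hg t
  have h := congrArg (fun v : VThree n => v ⟨t.1, t.2.1⟩) hg
  simpa [Finsupp.finset_sum_apply, bI_apply, Finset.sum_ite_eq', mul_ite] using h

end WithM

/-- The set of images of the generators. -/
def SS (n : ℕ) : Set (VThree n) :=
  {v | ∃ i j k l : Fin n, qDistinct (i, j, k, l) ∧ v = tet i j k l}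

lemma qDistinct_mk (i j k l : Fin n) :
    qDistinct (i, j, k, l) ↔ ({i, j, k, l} : Finset (Fin n)).card = 4 := Iff.rfl

section WithM2

variable (M : Fin n)

lemma tetM_mem {i j k : Fin n} (hij : i ≠ j) (hik : i ≠ k) (hjk : j ≠ k)
    (hiM : i ≠ M) (hjM : j ≠ M) (hkM : k ≠ M) :
    tet i j k M ∈ Submodule.span (ZMod 2) (Set.range (bI M)) := by
  rw [← bb_eq M hij hik hjk]
  exact Submodule.subset_span
    ⟨⟨{i, j, k}, card3_of_ne hij hik hjk, by simp [Ne.symm hiM, Ne.symm hjM, Ne.symm hkM]⟩, rfl⟩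

lemma tet_mem {i j k l : Fin n} (h : qDistinct (i, j, k, l)) :
    tet i j k l ∈ Submodule.span (ZMod 2) (Set.range (bI M)) := by
  obtain ⟨hij, hik, hil, hjk, hjl, hkl⟩ := card4_ne ((qDistinct_mk i j k l).mp h)
  by_cases hi : i = M
  · rw [hi] at hij hik hil ⊢
    rw [tet_cycle]
    exact tetM_mem M hjk hjl hkl (Ne.symm hij) (Ne.symm hik) (Ne.symm hil)
  by_cases hj : j = M
  · rw [hj] at hij hjk hjl ⊢
    rw [tet_cycle, tet_cycle]
    exact tetM_mem M hkl (Ne.symm hik) (Ne.symm hil) (Ne.symm hjk) (Ne.symm hjl) hij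
  by_cases hk : k = M
  · rw [hk] at hik hjk hkl ⊢
    rw [tet_cycle, tet_cycle, tet_cycle]
    exact tetM_mem M (Ne.symm hil) (Ne.symm hjl) hij (Ne.symm hkl) hik hjk
  by_cases hl : l = M
  · rw [hl] at hil hjl hkl ⊢
    exact tetM_mem M hij hik hjk hil hjl hkl
  · rw [tet_rel i j k l M]
    exact add_mem (add_mem (add_mem
      (tetM_mem M hij hik hjk hi hj hk)
      (tetM_mem M hij hil hjl hi hj hl))
      (tetM_mem M hik hil hkl hi hk hl))
      (tetM_mem M hjk hjl hkl hj hk hl)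

lemma span_eq :
    Submodule.span (ZMod 2) (SS n) = Submodule.span (ZMod 2) (Set.range (bI M)) := by
  apply le_antisymm
  · rw [Submodule.span_le]
    rintro v ⟨i, j, k, l, h, rfl⟩
    exact tet_mem M h
  · rw [Submodule.span_le]
    rintro v ⟨s, rfl⟩
    obtain ⟨i, j, k, hij, hik, hjk, hs⟩ := Finset.card_eq_three.mp s.2.1
    have hiM : i ≠ M := fun h => s.2.2 (by rw [hs]; simp [h.symm])
    have hjM : j ≠ M := fun h => s.2.2 (by rw [hs]; simp [h.symm])
    have hkM : k ≠ M := fun h => s.2.2 (by rw [hs]; simp [h.symm])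
    have : bI M s = tet i j k M := by rw [bI]; rw [show s.1 = {i,j,k} from hs]; exact bb_eq M hij hik hjk
    rw [this]
    exact Submodule.subset_span
      ⟨i, j, k, M, (qDistinct_mk i j k M).mpr (card4_of_ne hij hik hiM hjk hjM hkM), rfl⟩

lemma card_II : Fintype.card (II M) = (n - 1).choose 3 := by
  rw [Fintype.card_subtype]
  have : (Finset.univ.filter fun s : Finset (Fin n) => s.card = 3 ∧ M ∉ s) =
      Finset.powersetCard 3 (Finset.univ.erase M) := by
    ext s
    simp only [Finset.mem_filter, Finset.mem_univ, true_and, Finset.mem_powersetCard,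
      Finset.subset_erase, Finset.subset_univ, true_and]
    tauto
  rw [this, Finset.card_powersetCard, Finset.card_erase_of_mem (Finset.mem_univ M),
    Finset.card_univ, Fintype.card_fin]

end WithM2

end GammaAux

open GammaAux in
/-- For every `n ≥ 4`, the image of the homomorphism `Φ₃⁽²⁾ : Γ_n^4 → (ℤ/2ℤ)[n]_3`, where
`Φ₃⁽²⁾((ijkl)) = {i,j,k} + {i,j,l} + {i,k,l} + {j,k,l}`, is a `ℤ/2ℤ`-vector space of
dimension `C(n-1,3)`, i.e. it is isomorphic to `(ℤ/2ℤ)^{C(n-1,3)}`. -/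
theorem gamma_Phi3_image (n : ℕ) (hn : 4 ≤ n)
    (φ : Gamma n →* Multiplicative (VThree n))
    (hφ : ∀ i j k l : Fin n, qDistinct (i, j, k, l) →
      φ (gg (i, j, k, l)) =
        Multiplicative.ofAdd (tri2 i j k + tri2 i j l + tri2 i k l + tri2 j k l)) :
    Nonempty (φ.range ≃* Multiplicative (Fin ((n - 1).choose 3) → ZMod 2)) := by
  classical
  set M : Fin n := ⟨n - 1, by omega⟩ with hM
  set W : Submodule (ZMod 2) (VThree n) := Submodule.span (ZMod 2) (SS n) with hWdef
  -- generators with non-distinct entries are trivial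
  have gg_one : ∀ q : Quad n, ¬ qDistinct q → gg q = 1 := by
    intro q hq
    have hmem : FreeGroup.of q ∈ Subgroup.normalClosure (gammaRels n) :=
      Subgroup.subset_normalClosure (Or.inl (Or.inl (Or.inl (Or.inl ⟨q, hq, rfl⟩))))
    exact (QuotientGroup.eq_one_iff _).mpr hmem
  -- the range of φ is the closure of the images of the generators
  have hrange : φ.range = Subgroup.closure (Set.range (φ ∘ gg)) := by
    rw [MonoidHom.range_eq_map, ← PresentedGroup.closure_range_of (gammaRels n),
      MonoidHom.map_closure, ← Set.range_comp]
    rfl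
  -- the subgroup corresponding to W
  let W' : Subgroup (Multiplicative (VThree n)) :=
    { carrier := {x | Multiplicative.toAdd x ∈ W}
      one_mem' := show (0 : VThree n) ∈ W from zero_mem W
      mul_mem' := fun {x y} hx hy => show Multiplicative.toAdd x + Multiplicative.toAdd y ∈ W from add_mem hx hy
      inv_mem' := fun {x} hx => show -Multiplicative.toAdd x ∈ W from neg_mem hx }
  have forward : φ.range ≤ W' := by
    rw [hrange]
    rw [Subgroup.closure_le]
    rintro x ⟨q, rfl⟩
    obtain ⟨i, j, k, l⟩ := q
    by_cases h : qDistinct (i, j, k, l)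
    · show Multiplicative.toAdd (φ (gg (i, j, k, l))) ∈ W
      rw [hφ i j k l h]
      exact Submodule.subset_span ⟨i, j, k, l, h, rfl⟩
    · show Multiplicative.toAdd (φ (gg (i, j, k, l))) ∈ W
      rw [gg_one _ h, map_one]
      exact zero_mem W
  have backward : ∀ v ∈ W, Multiplicative.ofAdd v ∈ φ.range := by
    intro v hv
    induction hv using Submodule.span_induction with
    | mem x hx =>
        obtain ⟨i, j, k, l, h, rfl⟩ := hx
        exact ⟨gg (i, j, k, l), hφ i j k l h⟩
    | zero => exact ⟨1, map_one φ⟩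
    | add x y hx hy ihx ihy => exact mul_mem ihx ihy
    | smul c x hx ih =>
        rcases (by decide : ∀ c : ZMod 2, c = 0 ∨ c = 1) c with rfl | rfl
        · rw [zero_smul]
          exact ⟨1, map_one φ⟩
        · rw [one_smul]
          exact ih
  have hmem : ∀ x : Multiplicative (VThree n),
      x ∈ φ.range ↔ Multiplicative.toAdd x ∈ W :=
    fun x => ⟨fun h => forward h, fun h => backward _ h⟩
  -- the multiplicative equivalence between the range and W
  let e0 : φ.range ≃* Multiplicative ↥W :=
    { toFun := fun x => Multiplicative.ofAdd
        (⟨Multiplicative.toAdd (x : Multiplicative (VThree n)), (hmem x.1).1 x.2⟩ : W)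
      invFun := fun y => ⟨Multiplicative.ofAdd ((Multiplicative.toAdd y : W) : VThree n),
        (hmem _).2 (Multiplicative.toAdd y).2⟩
      left_inv := fun x => rfl
      right_inv := fun y => rfl
      map_mul' := fun x y => rfl }
  -- linear equivalences
  have hspan : W = Submodule.span (ZMod 2) (Set.range (bI M)) := span_eq M
  let e1 : W ≃ₗ[ZMod 2] ↥(Submodule.span (ZMod 2) (Set.range (bI M))) :=
    LinearEquiv.ofEq _ _ hspan
  let e2 := (Module.Basis.span (bI_li M)).repr
  let eqI : II M ≃ Fin ((n - 1).choose 3) := Fintype.equivFinOfCardEq (card_II M)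
  let e3 : (II M →₀ ZMod 2) ≃ₗ[ZMod 2] (Fin ((n - 1).choose 3) →₀ ZMod 2) :=
    Finsupp.domLCongr eqI
  let e4 := Finsupp.linearEquivFunOnFinite (ZMod 2) (ZMod 2) (Fin ((n - 1).choose 3))
  let eW : W ≃ₗ[ZMod 2] (Fin ((n - 1).choose 3) → ZMod 2) :=
    e1 ≪≫ₗ e2 ≪≫ₗ e3 ≪≫ₗ e4
  exact ⟨e0.trans (AddEquiv.toMultiplicative eW.toAddEquiv)⟩
end

section
/- The group Γ_5^4 is infinite and non-commutative. -/
/-!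
`Γ_5^4` maps onto the infinite dihedral group `⟨sr 0, sr 1⟩ ≤ DihedralGroup 0`: the generators are
sent to `1`, `sr 0` or `sr 1`, and the relators all become trivial (a finite check; the
commutation relations are vacuous because two 4-subsets of a 5-set meet in at least 3 points).
The generators `(0234)` and `(0243)` go to `sr 0` and `sr 1`, which do not commute and whose
product `r 1` has infinite order.
-/

open DihedralGroup

theorem infinite_of_orderOf_map_eq_zero {G H : Type*} [Group G] [Monoid H] (φ : G →* H) {x : G}
    (hx : orderOf (φ x) = 0) : Infinite G := by
  by_contra hfin
  have : Finite G := not_infinite_iff_finite.mp hfin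
  have hdvd := orderOf_map_dvd φ x
  rw [hx, zero_dvd_iff] at hdvd
  exact (orderOf_pos x).ne' hdvd

theorem Finset.card_add_card_le_card_inter_add_card {α : Type*} [Fintype α] [DecidableEq α]
    (s t : Finset α) : s.card + t.card ≤ (s ∩ t).card + Fintype.card α := by
  rw [← card_inter_add_card_union]
  exact Nat.add_le_add_left (card_le_univ _) _

instance {n : ℕ} : DecidablePred (qDistinct (n := n)) :=
  fun q => inferInstanceAs (Decidable ((qFinset q).card = 4))

def pairImage : Fin 5 → Fin 5 → DihedralGroup 0
  | 1, 3 | 3, 1 | 2, 4 | 4, 2 => sr 0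
  | 1, 4 | 4, 1 | 2, 3 | 3, 2 => sr 1
  | _, _ => 1

/-- A generator `(ijkl)` is a 4-cycle up to dihedral symmetry, so it is determined by the
missing element `m = -(i + j + k + l)` (as `0 + 1 + 2 + 3 + 4 = 0` in `Fin 5`) and its diagonals.
Generators avoiding `0` go to `1`; a generator in which `0` is opposite to `p` goes to
`pairImage m p`, which only depends on the partition `{m, p} | {1, 2, 3, 4} \ {m, p}`. -/
def genImage (q : Quad 5) : DihedralGroup 0 :=
  if qDistinct q then
    pairImage (-(q.1 + q.2.1 + q.2.2.1 + q.2.2.2))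
      (if q.1 = 0 then q.2.2.1 else if q.2.1 = 0 then q.2.2.2
       else if q.2.2.1 = 0 then q.1 else q.2.1)
  else 1

theorem genImage_of_not_qDistinct {q : Quad 5} (hq : ¬ qDistinct q) : genImage q = 1 :=
  if_neg hq

set_option maxRecDepth 10000 in
theorem genImage_mul_self : ∀ q : Quad 5, genImage q * genImage q = 1 := by
  decide

theorem genImage_pentagon : ∀ i j k l m : Fin 5, ({i, j, k, l, m} : Finset (Fin 5)).card = 5 →
    genImage (i, j, k, l) * genImage (i, j, l, m) * genImage (j, k, l, m) *
      genImage (i, j, k, m) * genImage (i, k, l, m) = 1 := by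
  decide

theorem genImage_rotate_and_reverse : ∀ i j k l : Fin 5,
    genImage (i, j, k, l) = genImage (j, k, l, i) ∧
      genImage (i, j, k, l) = genImage (l, k, j, i) := by
  decide

theorem lift_genImage_eq_one : ∀ w ∈ gammaRels 5, FreeGroup.lift genImage w = 1 := by
  rintro w ((((⟨q, hq, rfl⟩ | ⟨q, -, rfl⟩) | ⟨q, r, hq, hr, hcard, rfl⟩) |
      ⟨i, j, k, l, m, hcard, rfl⟩) | ⟨i, j, k, l, -, rfl | rfl⟩)
  · simpa using genImage_of_not_qDistinct hq
  · simpa using genImage_mul_self q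
  · have := Finset.card_add_card_le_card_inter_add_card (qFinset q) (qFinset r)
    unfold qDistinct at hq hr
    simp only [Fintype.card_fin] at this
    omega
  · simpa using genImage_pentagon i j k l m hcard
  · simp [(genImage_rotate_and_reverse i j k l).1]
  · simp [(genImage_rotate_and_reverse i j k l).2]

def toInfiniteDihedral : Gamma 5 →* DihedralGroup 0 :=
  PresentedGroup.toGroup lift_genImage_eq_one

theorem toInfiniteDihedral_gg (q : Quad 5) : toInfiniteDihedral (gg q) = genImage q :=
  PresentedGroup.toGroup.of lift_genImage_eq_one

/-- The group `Γ_5^4` is infinite and non-commutative. -/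
theorem gamma_five_infinite_noncomm :
    Infinite (Gamma 5) ∧ ∃ a b : Gamma 5, a * b ≠ b * a := by
  set a : Gamma 5 := gg (0, 2, 3, 4)
  set b : Gamma 5 := gg (0, 2, 4, 3)
  have ha : toInfiniteDihedral a = sr 0 := by rw [toInfiniteDihedral_gg]; decide
  have hb : toInfiniteDihedral b = sr 1 := by rw [toInfiniteDihedral_gg]; decide
  refine ⟨infinite_of_orderOf_map_eq_zero toInfiniteDihedral (x := a * b) ?_, a, b, fun h => ?_⟩
  · rw [map_mul, ha, hb, sr_mul_sr, sub_zero, orderOf_r_one]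
  · have hab := congrArg toInfiniteDihedral h
    rw [map_mul, map_mul, ha, hb, sr_mul_sr, sr_mul_sr] at hab
    exact absurd hab (by decide)
end

section
/- For every n ≥ 4: (a) the set Λ' = {(1jkl) : 2 ≤ j < k < l ≤ n} generates the group Δ_n^4; (b) every generating set of Δ_n^4 has at least N'_n = C(n−1,3) elements, so Λ' is a minimal generating set; and (c) the abelianization of Δ_n^4 is isomorphic to (ℤ/2ℤ)^{N'_n}. -/
/-- The quadruple `(i, j, k, l)` is strictly increasing: `i < j < k < l`. -/
def qInc {n : ℕ} (q : Quad n) : Prop := q.1 < q.2.1 ∧ q.2.1 < q.2.2.1 ∧ q.2.2.1 < q.2.2.2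

/-- The defining relators of the group `Δ_n^4` (the increasing-order version of `Γ_n^4`):
generators indexed by strictly increasing quadruples (other quadruples are killed),
involutive relations (1), commutativity relations (2) and pentagon relations (3) for
`i < j < k < l < m`. -/
def deltaRels (n : ℕ) : Set (FreeGroup (Quad n)) :=
  {w | ∃ q : Quad n, ¬ qInc q ∧ w = FreeGroup.of q} ∪
  {w | ∃ q : Quad n, qInc q ∧ w = FreeGroup.of q * FreeGroup.of q} ∪
  {w | ∃ q r : Quad n, qInc q ∧ qInc r ∧ (qFinset q ∩ qFinset r).card ≤ 2 ∧
      w = FreeGroup.of q * FreeGroup.of r * (FreeGroup.of q)⁻¹ * (FreeGroup.of r)⁻¹} ∪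
  {w | ∃ i j k l m : Fin n, i < j ∧ j < k ∧ k < l ∧ l < m ∧
      w = FreeGroup.of (i, j, k, l) * FreeGroup.of (i, j, l, m) * FreeGroup.of (j, k, l, m) *
        FreeGroup.of (i, j, k, m) * FreeGroup.of (i, k, l, m)}

/-- The group `Δ_n^4`, the increasing-order version of `Γ_n^4`. -/
abbrev Delta (n : ℕ) : Type := PresentedGroup (deltaRels n)

/-- The generator `(ijkl)` of `Δ_n^4`. -/
def dd {n : ℕ} (q : Quad n) : Delta n := PresentedGroup.of q
/-- The set `Λ' = {(1jkl) : 2 ≤ j < k < l ≤ n}` of generators of `Δ_n^4` (with 0-based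
indices, so the paper's index `1` is `0`). -/
def LambdaDelta (n : ℕ) : Set (Delta n) :=
  {x | ∃ a j k l : Fin n, (a : ℕ) = 0 ∧ a < j ∧ j < k ∧ k < l ∧ x = dd (a, j, k, l)}

/-!
The pentagon relation for `0 < i < j < k < l` expresses `(ijkl)` through the four generators
`(0ijk), (0ikl), (0ijl), (0jkl)` of `Λ'`, so `Λ'` generates.

Send `(ijkl)` to the sum of the basis vectors `e_T` of `(ℤ/2)^{N'_n}` over the 3-element subsets
`T ⊆ {i, j, k, l}` avoiding `0`. This respects the relations: a 3-element subset of a 5-element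
set lies in exactly two of its 4-element subsets, so the pentagon relator goes to `0`. It sends
`(0abc)` to `e_{abc}`, hence maps the `N'_n` commuting involutions by which `Λ'` generates the
abelianization onto a basis, and is an isomorphism on the abelianization. A generating set of
`Δ_n^4` maps onto a generating set of `(ℤ/2)^{N'_n}`, which has at least `N'_n` elements.
-/

open Multiplicative

section PiZModTwo

variable {ι : Type*}

theorem mul_self_eq_one_of_pi_zmod_two (a : Multiplicative (ι → ZMod 2)) : a * a = 1 :=
  funext fun _ => CharTwo.add_self_eq_zero _

variable [Fintype ι]

theorem closure_range_ofAdd_single [DecidableEq ι] :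
    Subgroup.closure (Set.range fun i : ι => ofAdd (Pi.single i (1 : ZMod 2))) = ⊤ := by
  refine eq_top_iff.2 fun f _ => ?_
  rw [← ofAdd_toAdd f, ← Finset.univ_sum_single (toAdd f), ofAdd_sum]
  refine Subgroup.prod_mem _ fun i _ => ?_
  rcases (by decide : ∀ c : ZMod 2, c = 0 ∨ c = 1) (toAdd f i) with h | h <;> rw [h]
  · rw [Pi.single_zero, ofAdd_zero]
    exact Subgroup.one_mem _
  · exact Subgroup.subset_closure ⟨i, rfl⟩

variable {M : Type*} [CommGroup M]

def piZModTwoLift (x : ι → M) (hx : ∀ i, x i * x i = 1) :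
    Multiplicative (ι → ZMod 2) →* M where
  toFun f := ∏ i, x i ^ (toAdd f i).val
  map_one' := by simp
  map_mul' f g := by
    rw [← Finset.prod_mul_distrib]
    refine Finset.prod_congr rfl fun i _ => ?_
    rw [toAdd_mul, Pi.add_apply, ZMod.val_add, ← pow_add,
      ← pow_eq_pow_mod _ ((pow_two (x i)).trans (hx i))]

theorem piZModTwoLift_ofAdd_single [DecidableEq ι] (x : ι → M) (hx : ∀ i, x i * x i = 1)
    (i : ι) : piZModTwoLift x hx (ofAdd (Pi.single i 1)) = x i := by
  rw [piZModTwoLift, MonoidHom.coe_mk, OneHom.coe_mk, Finset.prod_eq_single i]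
  · simp [ZMod.val_one]
  · intro j _ hj
    simp [Pi.single_eq_of_ne hj]
  · simp

theorem range_piZModTwoLift (x : ι → M) (hx : ∀ i, x i * x i = 1) :
    (piZModTwoLift x hx).range = Subgroup.closure (Set.range x) := by
  classical
  rw [MonoidHom.range_eq_map, ← closure_range_ofAdd_single, MonoidHom.map_closure,
    ← Set.range_comp]
  exact congrArg _ (congrArg Set.range (funext (piZModTwoLift_ofAdd_single x hx)))

end PiZModTwo

section Abelianization

variable {ι G : Type*} [Fintype ι] [Group G]

def abelianizationEquivOfBasis [DecidableEq ι] (x : ι → G)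
    (hgen : Subgroup.closure (Set.range x) = ⊤) (hx : ∀ i, x i * x i = 1)
    (φ : G →* Multiplicative (ι → ZMod 2)) (hφ : ∀ i, φ (x i) = ofAdd (Pi.single i 1)) :
    Abelianization G ≃* Multiplicative (ι → ZMod 2) :=
  MonoidHom.toMulEquiv (Abelianization.lift φ)
    (piZModTwoLift (fun i => Abelianization.of (x i)) fun i => by rw [← map_mul, hx, map_one])
    (Abelianization.hom_ext _ _ <| MonoidHom.eq_of_eqOn_dense hgen <| by
      rintro _ ⟨i, rfl⟩
      simp [hφ, piZModTwoLift_ofAdd_single])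
    (MonoidHom.eq_of_eqOn_dense closure_range_ofAdd_single <| by
      rintro _ ⟨i, rfl⟩
      simp [hφ, piZModTwoLift_ofAdd_single])

theorem card_le_ncard_of_closure_eq_top {φ : G →* Multiplicative (ι → ZMod 2)}
    (hφ : Function.Surjective φ) {S : Set G} (hS : S.Finite) (hgen : Subgroup.closure S = ⊤) :
    Fintype.card ι ≤ S.ncard := by
  classical
  have := hS.fintype
  let ψ := piZModTwoLift (fun s : S => φ s) fun _ => mul_self_eq_one_of_pi_zmod_two _
  have hψ : Function.Surjective ψ := by
    rw [← MonoidHom.range_eq_top, range_piZModTwoLift, Set.range_comp' φ Subtype.val,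
      Subtype.range_coe, ← MonoidHom.map_closure, hgen, ← MonoidHom.range_eq_map,
      MonoidHom.range_eq_top.2 hφ]
  have hcard := Fintype.card_le_of_surjective ψ hψ
  simp only [Fintype.card_multiplicative, Fintype.card_fun, ZMod.card] at hcard
  rw [← Nat.card_coe_set_eq, Nat.card_eq_fintype_card]
  exact (Nat.pow_le_pow_iff_right one_lt_two).1 hcard

end Abelianization

theorem Finset.sum_ite_subset_erase_eq_zero {α : Type*} [DecidableEq α] {S T : Finset α}
    (h : T.card + 2 = S.card) :
    ∑ c ∈ S, (if T ⊆ S.erase c then (1 : ZMod 2) else 0) = 0 := by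
  by_cases hTS : T ⊆ S
  · have hfilter : S.filter (fun c => T ⊆ S.erase c) = S \ T := by
      ext c
      simp [Finset.subset_erase, hTS]
    rw [Finset.sum_boole, hfilter, Finset.card_sdiff_of_subset hTS,
      show S.card - T.card = 2 by omega]
    rfl
  · exact Finset.sum_eq_zero fun c _ => if_neg fun h => hTS (h.trans (S.erase_subset c))

namespace Delta

variable {n : ℕ}

theorem dd_of_not_qInc {q : Quad n} (h : ¬ qInc q) : dd q = 1 :=
  PresentedGroup.one_of_mem (Or.inl (Or.inl (Or.inl ⟨q, h, rfl⟩)))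

theorem dd_mul_self (q : Quad n) : dd q * dd q = 1 := by
  by_cases h : qInc q
  · exact PresentedGroup.one_of_mem (Or.inl (Or.inl (Or.inr ⟨q, h, rfl⟩)))
  · rw [dd_of_not_qInc h, one_mul]

theorem dd_pentagon {i j k l m : Fin n} (h1 : i < j) (h2 : j < k) (h3 : k < l) (h4 : l < m) :
    dd (i, j, k, l) * dd (i, j, l, m) * dd (j, k, l, m) * dd (i, j, k, m) * dd (i, k, l, m)
      = 1 :=
  PresentedGroup.one_of_mem (Or.inr ⟨i, j, k, l, m, h1, h2, h3, h4, rfl⟩)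

theorem closure_lambdaDelta : Subgroup.closure (LambdaDelta n) = ⊤ := by
  rw [eq_top_iff, ← PresentedGroup.closure_range_of, Subgroup.closure_le]
  rintro _ ⟨⟨i, j, k, l⟩, rfl⟩
  change dd (i, j, k, l) ∈ _
  by_cases hq : qInc (i, j, k, l)
  swap
  · rw [dd_of_not_qInc hq]
    exact Subgroup.one_mem _
  obtain ⟨h1, h2, h3⟩ := hq
  have : NeZero n := NeZero.of_pos i.pos
  have mem {a b c : Fin n} (ha : 0 < a) (hb : a < b) (hc : b < c) :
      dd (0, a, b, c) ∈ Subgroup.closure (LambdaDelta n) :=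
    Subgroup.subset_closure ⟨0, a, b, c, rfl, ha, hb, hc, rfl⟩
  rcases (Fin.zero_le i).eq_or_lt with rfl | h0
  · exact mem h1 h2 h3
  · set A := dd (0, i, j, k)
    set B := dd (0, i, k, l)
    set C := dd (0, i, j, l)
    set D := dd (0, j, k, l)
    have hX : dd (i, j, k, l) = (A * B)⁻¹ * (C * D)⁻¹ :=
      calc dd (i, j, k, l) = (A * B)⁻¹ * (A * B * dd (i, j, k, l) * C * D) * (C * D)⁻¹ := by
            group
        _ = (A * B)⁻¹ * (C * D)⁻¹ := by rw [dd_pentagon h0 h1 h2 h3, mul_one]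
    rw [hX]
    exact mul_mem (inv_mem (mul_mem (mem h0 h1 h2) (mem h0 (h1.trans h2) h3)))
      (inv_mem (mul_mem (mem h0 h1 (h2.trans h3)) (mem (h0.trans h1) h2 h3)))

variable (n) in
/-- `{a, b, c}` stands for the generator `(0abc)` of `Λ'`. -/
abbrev Triple [NeZero n] : Type := {T : Finset (Fin n) // T.card = 3 ∧ (0 : Fin n) ∉ T}

instance : DecidablePred (qInc (n := n)) := fun _ => inferInstanceAs (Decidable (_ ∧ _ ∧ _))

variable [NeZero n]

theorem card_triple : Fintype.card (Triple n) = (n - 1).choose 3 := by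
  rw [Fintype.card_subtype]
  have : Finset.univ.filter (fun T : Finset (Fin n) => T.card = 3 ∧ (0 : Fin n) ∉ T)
      = (Finset.univ.erase (0 : Fin n)).powersetCard 3 := by
    ext T
    simp only [Finset.mem_filter, Finset.mem_univ, true_and, Finset.mem_powersetCard,
      Finset.subset_erase, Finset.subset_univ, true_and]
    tauto
  rw [this, Finset.card_powersetCard, Finset.card_erase_of_mem (Finset.mem_univ _),
    Finset.card_univ, Fintype.card_fin]

def faceVector (q : Quad n) : Multiplicative (Triple n → ZMod 2) :=
  ofAdd fun T => if qInc q ∧ T.1 ⊆ qFinset q then 1 else 0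

theorem faceVector_pentagon {i j k l m : Fin n} (h1 : i < j) (h2 : j < k) (h3 : k < l)
    (h4 : l < m) :
    faceVector (i, j, k, l) * faceVector (i, j, l, m) * faceVector (j, k, l, m) *
      faceVector (i, j, k, m) * faceVector (i, k, l, m) = 1 := by
  set S : Finset (Fin n) := {i, j, k, l, m}
  have hS : S.card = 5 := by
    rw [Finset.card_insert_of_notMem (by grind), Finset.card_insert_of_notMem (by grind),
      Finset.card_insert_of_notMem (by grind), Finset.card_pair (by omega)]
  have hsum (f : Fin n → ZMod 2) : ∑ c ∈ S, f c = f i + (f j + (f k + (f l + f m))) := by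
    rw [Finset.sum_insert (by grind), Finset.sum_insert (by grind),
      Finset.sum_insert (by grind), Finset.sum_pair (by omega)]
  have e1 : qFinset (i, j, k, l) = S.erase m := by ext; grind [qFinset]
  have e2 : qFinset (i, j, l, m) = S.erase k := by ext; grind [qFinset]
  have e3 : qFinset (j, k, l, m) = S.erase i := by ext; grind [qFinset]
  have e4 : qFinset (i, j, k, m) = S.erase l := by ext; grind [qFinset]
  have e5 : qFinset (i, k, l, m) = S.erase j := by ext; grind [qFinset]
  simp only [faceVector, ← ofAdd_add, ← ofAdd_zero, qInc, e1, e2, e3, e4, e5]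
  congr 1
  funext T
  have := Finset.sum_ite_subset_erase_eq_zero (S := S) (T := T.1) (by rw [T.2.1, hS])
  rw [hsum] at this
  simp only [Pi.add_apply, Pi.zero_apply, h1, h2, h3, h4, h1.trans h2, h2.trans h3, h3.trans h4,
    true_and]
  linear_combination this

theorem faceVector_mem_rels : ∀ r ∈ deltaRels n, FreeGroup.lift faceVector r = 1 := by
  rintro r (((⟨q, hq, rfl⟩ | ⟨q, -, rfl⟩) | ⟨q, s, -, -, -, rfl⟩) |
    ⟨i, j, k, l, m, h1, h2, h3, h4, rfl⟩)
  · rw [FreeGroup.lift_apply_of]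
    exact congrArg ofAdd (funext fun T => if_neg fun h => hq h.1)
  · rw [map_mul]
    exact mul_self_eq_one_of_pi_zmod_two _
  · simp only [map_mul, map_inv]
    rw [mul_right_comm, mul_inv_cancel_right, mul_inv_cancel]
  · simpa only [map_mul, FreeGroup.lift_apply_of] using faceVector_pentagon h1 h2 h3 h4

variable (n) in
def faceHom : Delta n →* Multiplicative (Triple n → ZMod 2) :=
  PresentedGroup.toGroup faceVector_mem_rels

theorem faceHom_dd (q : Quad n) : faceHom n (dd q) = faceVector q :=
  PresentedGroup.toGroup.of _

def Triple.ofLT {a b c : Fin n} (h0 : 0 < a) (h1 : a < b) (h2 : b < c) : Triple n :=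
  ⟨{a, b, c}, Finset.card_eq_three.2 ⟨a, b, c, h1.ne, (h1.trans h2).ne, h2.ne, rfl⟩,
    by grind⟩

theorem Triple.exists_eq_ofLT (T : Triple n) :
    ∃ (a b c : Fin n) (h0 : 0 < a) (h1 : a < b) (h2 : b < c), T = Triple.ofLT h0 h1 h2 := by
  set e := T.1.orderEmbOfFin T.2.1
  have mem (i : Fin 3) : e i ∈ T.1 := T.1.orderEmbOfFin_mem T.2.1 i
  have h1 : e 0 < e 1 := e.strictMono (by decide)
  have h2 : e 1 < e 2 := e.strictMono (by decide)
  have h0 : 0 < e 0 := (Fin.zero_le _).lt_of_ne fun h => T.2.2 (by simpa only [← h] using mem 0)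
  refine ⟨e 0, e 1, e 2, h0, h1, h2, Subtype.ext ?_⟩
  refine (Finset.eq_of_subset_of_card_le (s := (Triple.ofLT h0 h1 h2).1) ?_ ?_).symm
  · simp [Triple.ofLT, Finset.insert_subset_iff, mem]
  · rw [T.2.1, (Triple.ofLT h0 h1 h2).2.1]

def Triple.quad (T : Triple n) : Quad n :=
  (0, T.1.orderEmbOfFin T.2.1 0, T.1.orderEmbOfFin T.2.1 1, T.1.orderEmbOfFin T.2.1 2)

theorem Triple.quad_ofLT {a b c : Fin n} (h0 : 0 < a) (h1 : a < b) (h2 : b < c) :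
    (Triple.ofLT h0 h1 h2).quad = (0, a, b, c) := by
  have hsort :
      ![a, b, c] = (Triple.ofLT h0 h1 h2).1.orderEmbOfFin (Triple.ofLT h0 h1 h2).2.1 := by
    refine Finset.orderEmbOfFin_unique _ (fun i => by fin_cases i <;> simp [Triple.ofLT]) ?_
    refine Fin.strictMono_iff_lt_succ.2 fun i => ?_
    fin_cases i
    exacts [h1, h2]
  simp [Triple.quad, ← hsort]

theorem faceVector_zero {a b c : Fin n} (h0 : 0 < a) (h1 : a < b) (h2 : b < c) :
    faceVector (0, a, b, c) = ofAdd (Pi.single (Triple.ofLT h0 h1 h2) 1) := by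
  refine congrArg ofAdd (funext fun T => ?_)
  rw [Pi.single_apply]
  refine if_congr ⟨fun ⟨_, hT⟩ => Subtype.ext ?_, ?_⟩ rfl rfl
  · exact Finset.eq_of_subset_of_card_le ((Finset.subset_insert_iff_of_notMem T.2.2).1 hT)
      (by rw [T.2.1, (Triple.ofLT h0 h1 h2).2.1])
  · rintro rfl
    exact ⟨⟨h0, h1, h2⟩, Finset.subset_insert _ _⟩

theorem faceHom_dd_quad (T : Triple n) : faceHom n (dd T.quad) = ofAdd (Pi.single T 1) := by
  obtain ⟨a, b, c, h0, h1, h2, rfl⟩ := T.exists_eq_ofLT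
  rw [Triple.quad_ofLT, faceHom_dd, faceVector_zero]

theorem lambdaDelta_eq_range : LambdaDelta n = Set.range fun T : Triple n => dd T.quad := by
  ext x
  constructor
  · rintro ⟨a, b, c, d, ha, h1, h2, h3, rfl⟩
    obtain rfl : a = 0 := Fin.ext ha
    exact ⟨Triple.ofLT h1 h2 h3, congrArg dd (Triple.quad_ofLT h1 h2 h3)⟩
  · rintro ⟨T, rfl⟩
    obtain ⟨a, b, c, h0, h1, h2, rfl⟩ := T.exists_eq_ofLT
    exact ⟨0, a, b, c, rfl, h0, h1, h2, congrArg dd (Triple.quad_ofLT h0 h1 h2)⟩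

theorem injective_dd_quad : Function.Injective fun T : Triple n => dd T.quad := by
  intro S T h
  have := congr_fun (congrArg toAdd (congrArg (faceHom n) h)) S
  by_contra hne
  simp [faceHom_dd_quad, Ne.symm hne] at this

theorem faceHom_surjective : Function.Surjective (faceHom n) := by
  rw [← MonoidHom.range_eq_top, eq_top_iff, ← closure_range_ofAdd_single, Subgroup.closure_le]
  rintro _ ⟨T, rfl⟩
  exact ⟨dd T.quad, faceHom_dd_quad T⟩

end Delta

open Delta

/-- For every `n ≥ 4`: (a) the set `Λ' = {(1jkl) : 2 ≤ j < k < l ≤ n}` generates `Δ_n^4`;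
(b) every generating set of `Δ_n^4` has at least `N'_n = C(n-1,3)` elements and `Λ'` has
exactly `N'_n` elements, so `Λ'` is a minimal generating set; and (c) the abelianization of
`Δ_n^4` is isomorphic to `(ℤ/2ℤ)^{N'_n}`. -/
theorem delta_min_generators_abelianization (n : ℕ) (hn : 4 ≤ n) :
    Subgroup.closure (LambdaDelta n) = ⊤ ∧
    (∀ S : Set (Delta n), S.Finite → Subgroup.closure S = ⊤ →
      (n - 1).choose 3 ≤ S.ncard) ∧
    (LambdaDelta n).ncard = (n - 1).choose 3 ∧
    Nonempty (Abelianization (Delta n) ≃*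
      Multiplicative (Fin ((n - 1).choose 3) → ZMod 2)) := by
  have : NeZero n := ⟨by omega⟩
  have hgen : Subgroup.closure (Set.range fun T : Triple n => dd T.quad) = ⊤ := by
    rw [← lambdaDelta_eq_range, closure_lambdaDelta]
  refine ⟨closure_lambdaDelta, fun S hS hSgen => ?_, ?_, ⟨?_⟩⟩
  · rw [← card_triple]
    exact card_le_ncard_of_closure_eq_top faceHom_surjective hS hSgen
  · rw [lambdaDelta_eq_range, ← Set.image_univ, Set.ncard_image_of_injective _ injective_dd_quad,
      Set.ncard_univ, Nat.card_eq_fintype_card, card_triple]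
  · let e : Triple n ≃ Fin ((n - 1).choose 3) := Fintype.equivFinOfCardEq card_triple
    exact (abelianizationEquivOfBasis _ hgen (fun T => dd_mul_self T.quad) (faceHom n)
      faceHom_dd_quad).trans (RingEquiv.piCongrLeft (fun _ => ZMod 2) e).toAddEquiv.toMultiplicative
end
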